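/- The largest a > 0 such that the triangle with vertices (0,0), (a,0), (0,a) is contained in the region Ω₀ bounded by the coordinate axes and the curve γ(α) = (2 sin(α/2) − α cos(α/2), 2 sin(α/2) + (2π − α) cos(α/2)), α ∈ [0,2π], equals 4; i.e., the first weight of Ω₀ is w₁ = 4. -/

import Mathlib

open Real

/-- The region Ω₀ bounded by the coordinate axes and the curve
γ(α) = (2sin(α/2) − α cos(α/2), 2sin(α/2) + (2π − α)cos(α/2)): a point of the
first quadrant lies in Ω₀ iff it is (weakly) below some point of the curve. -/
def Omega0 : Set (ℝ × ℝ) :=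
  {z | 0 ≤ z.1 ∧ 0 ≤ z.2 ∧ ∃ α ∈ Set.Icc (0:ℝ) (2*π),
    z.1 ≤ 2 * Real.sin (α/2) - α * Real.cos (α/2) ∧
    z.2 ≤ 2 * Real.sin (α/2) + (2*π - α) * Real.cos (α/2)}

/-!
The second coordinate of γ is the first one reflected, `γ₂(α) = γ₁(2π - α)`, and
`γ₁'(α) = (α/2) sin(α/2) ≥ 0`, so γ₁ increases on `[0, 2π]` from `0` to `2π`, passing
through `γ₁(π) = 2`. The derivative of `γ₁(α) + γ₁(2π - α)` is `(α - π) sin(α/2)`, so the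
sum is smallest at `α = π`, where it is `4`: choosing `α` with `γ₁(α) = x` puts every
`(x, y)` with `x + y ≤ 4` under the curve. Conversely, for `(a/2, a/2) ∈ Ω₀` one of
`α, 2π - α` is at most `π`, so `a/2 ≤ γ₁(π) = 2`.
-/

open Set

noncomputable def curveX (α : ℝ) : ℝ := 2 * sin (α / 2) - α * cos (α / 2)

lemma curveX_two_pi_sub (α : ℝ) :
    curveX (2 * π - α) = 2 * sin (α / 2) + (2 * π - α) * cos (α / 2) := by
  have h : (2 * π - α) / 2 = π - α / 2 := by ring
  rw [curveX, h, sin_pi_sub, cos_pi_sub]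
  ring

lemma mem_Omega0_iff {z : ℝ × ℝ} :
    z ∈ Omega0 ↔ 0 ≤ z.1 ∧ 0 ≤ z.2 ∧
      ∃ α ∈ Icc 0 (2 * π), z.1 ≤ curveX α ∧ z.2 ≤ curveX (2 * π - α) := by
  simp only [curveX_two_pi_sub]
  rfl

lemma curveX_zero : curveX 0 = 0 := by simp [curveX]

lemma curveX_pi : curveX π = 2 := by simp [curveX]

lemma curveX_two_pi : curveX (2 * π) = 2 * π := by
  simpa using curveX_two_pi_sub 0

lemma hasDerivAt_curveX (α : ℝ) : HasDerivAt curveX (α / 2 * sin (α / 2)) α := by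
  have half : HasDerivAt (fun x : ℝ => x / 2) (1 / 2) α := by
    simpa using (hasDerivAt_id α).div_const 2
  have h := (half.sin.const_mul 2).sub ((hasDerivAt_id α).mul half.cos)
  refine h.congr_deriv ?_
  simp only [id_eq]
  ring

lemma continuous_curveX : Continuous curveX :=
  continuous_iff_continuousAt.2 fun α => (hasDerivAt_curveX α).continuousAt

lemma hasDerivAt_curveX_add_reflect (α : ℝ) :
    HasDerivAt (fun β => curveX β + curveX (2 * π - β)) ((α - π) * sin (α / 2)) α := by
  have h := (hasDerivAt_curveX α).add
    ((hasDerivAt_curveX (2 * π - α)).comp α ((hasDerivAt_id α).const_sub (2 * π)))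
  refine h.congr_deriv ?_
  have h2 : (2 * π - α) / 2 = π - α / 2 := by ring
  rw [h2, sin_pi_sub]
  ring

lemma strictMonoOn_curveX : StrictMonoOn curveX (Icc 0 (2 * π)) := by
  refine strictMonoOn_of_hasDerivWithinAt_pos (convex_Icc _ _) continuous_curveX.continuousOn
    (fun α _ => (hasDerivAt_curveX α).hasDerivWithinAt) fun α hα => ?_
  rw [interior_Icc] at hα
  have : 0 < sin (α / 2) := sin_pos_of_pos_of_lt_pi (by linarith [hα.1]) (by linarith [hα.2])
  exact mul_pos (by linarith [hα.1]) this

lemma min_curveX_reflect_le_two {α : ℝ} (hα : α ∈ Icc 0 (2 * π)) :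
    min (curveX α) (curveX (2 * π - α)) ≤ 2 := by
  have hπ : π ∈ Icc 0 (2 * π) := ⟨pi_pos.le, by linarith [pi_pos]⟩
  have hα' : 2 * π - α ∈ Icc 0 (2 * π) := ⟨by linarith [hα.2], by linarith [hα.1]⟩
  refine (?_ : _ ≤ curveX π).trans curveX_pi.le
  rcases le_total α π with h | h
  · exact min_le_of_left_le (strictMonoOn_curveX.monotoneOn hα hπ h)
  · exact min_le_of_right_le (strictMonoOn_curveX.monotoneOn hα' hπ (by linarith))

lemma four_le_curveX_add_reflect {α : ℝ} (hα : α ∈ Icc 0 (2 * π)) :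
    4 ≤ curveX α + curveX (2 * π - α) := by
  set S := fun β => curveX β + curveX (2 * π - β)
  have hS : Continuous S := continuous_curveX.add (continuous_curveX.comp (by fun_prop))
  have hSπ : S π = 4 := by
    simp only [S, show 2 * π - π = π by ring, curveX_pi]; norm_num
  have sin_half_nonneg : ∀ β ∈ Icc 0 (2 * π), 0 ≤ sin (β / 2) := fun β hβ =>
    sin_nonneg_of_nonneg_of_le_pi (by linarith [hβ.1]) (by linarith [hβ.2])
  rcases le_total α π with h | h
  · have anti : AntitoneOn S (Icc 0 π) := by
      refine antitoneOn_of_hasDerivWithinAt_nonpos (convex_Icc _ _) hS.continuousOn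
        (fun β _ => (hasDerivAt_curveX_add_reflect β).hasDerivWithinAt) fun β hβ => ?_
      rw [interior_Icc] at hβ
      exact mul_nonpos_of_nonpos_of_nonneg (by linarith [hβ.2])
        (sin_half_nonneg β ⟨hβ.1.le, by linarith [hβ.2, pi_pos]⟩)
    simpa [hSπ] using anti ⟨hα.1, h⟩ ⟨pi_pos.le, le_rfl⟩ h
  · have mono : MonotoneOn S (Icc π (2 * π)) := by
      refine monotoneOn_of_hasDerivWithinAt_nonneg (convex_Icc _ _) hS.continuousOn
        (fun β _ => (hasDerivAt_curveX_add_reflect β).hasDerivWithinAt) fun β hβ => ?_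
      rw [interior_Icc] at hβ
      exact mul_nonneg (by linarith [hβ.1])
        (sin_half_nonneg β ⟨by linarith [hβ.1, pi_pos], hβ.2.le⟩)
    simpa [hSπ] using mono ⟨le_rfl, by linarith [pi_pos]⟩ ⟨h, hα.2⟩ h

theorem stmt16 :
    IsGreatest {a : ℝ | 0 < a ∧
      ∀ z : ℝ × ℝ, 0 ≤ z.1 → 0 ≤ z.2 → z.1 + z.2 ≤ a → z ∈ Omega0} 4 := by
  refine ⟨⟨by norm_num, fun z hx hy hxy => mem_Omega0_iff.2 ⟨hx, hy, ?_⟩⟩, ?_⟩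
  · have hx_range : z.1 ∈ Icc (curveX 0) (curveX (2 * π)) := by
      rw [curveX_zero, curveX_two_pi]
      exact ⟨hx, by linarith [pi_gt_three]⟩
    obtain ⟨α, hα, hαx⟩ := intermediate_value_Icc (by linarith [pi_pos])
      continuous_curveX.continuousOn hx_range
    refine ⟨α, hα, hαx.ge, ?_⟩
    linarith [four_le_curveX_add_reflect hα]
  · rintro a ⟨ha, hmem⟩
    obtain ⟨-, -, α, hα, h1, h2⟩ :=
      mem_Omega0_iff.1 (hmem (a / 2, a / 2) (by simp; linarith) (by simp; linarith) (by simp))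
    have hdiag : a / 2 ≤ min (curveX α) (curveX (2 * π - α)) := le_min h1 h2
    linarith [min_curveX_reflect_le_two hα]
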